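/- arXiv:1710.10382 — 4 statements merged into one kernel-verified Lean document; each statement's English description precedes it below -/
import Mathlib

section
/- Consider n data points x_i = (1, z_i)ᵀ ∈ ℝ^{p+1} with z_i ∈ ℝ^p, and a 0-1 vector δ ∈ {0,1}ⁿ with ∑δ_i = k. Then det(∑ᵢ δᵢ xᵢ xᵢᵀ) ≤ (k^{p+1}/4^p) ∏_{j=1}^p (z_{(n)j} - z_{(1)j})², where z_{(n)j} = max_i z_{ij} and z_{(1)j} = min_i z_{ij}. -/
/-!
Subtracting the midrange `cⱼ = (maxᵢ z_{ij} + minᵢ z_{ij}) / 2` from every covariate is a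
unimodular change of coordinates of the vectors `xᵢ = (1, zᵢ)`, so it leaves the determinant
unchanged. For the centred information matrix, Hadamard's inequality bounds the determinant by
the product of the diagonal entries: the intercept entry is `∑ δᵢ = k`, and the `j`-th entry is
`∑ δᵢ (z_{ij} - cⱼ)² ≤ k (maxᵢ z_{ij} - minᵢ z_{ij})² / 4`.
-/

open Finset Matrix

theorem Real.prod_le_pow_sum_div_card {ι : Type*} (s : Finset ι) {z : ι → ℝ}
    (hz : ∀ i ∈ s, 0 ≤ z i) : ∏ i ∈ s, z i ≤ ((∑ i ∈ s, z i) / #s) ^ #s := by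
  rcases s.eq_empty_or_nonempty with rfl | hs
  · simp
  have hcard : #s ≠ 0 := hs.card_pos.ne'
  have amgm := Real.geom_mean_le_arith_mean_weighted s (fun _ => (#s : ℝ)⁻¹) z
    (fun _ _ => by positivity) (by simp [hcard]) hz
  calc ∏ i ∈ s, z i = (∏ i ∈ s, z i ^ (#s : ℝ)⁻¹) ^ #s := by
        rw [← prod_pow]
        exact prod_congr rfl fun i hi => (Real.rpow_inv_natCast_pow (hz i hi) hcard).symm
    _ ≤ (∑ i ∈ s, (#s : ℝ)⁻¹ * z i) ^ #s := by
        gcongr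
        exact prod_nonneg fun i hi => Real.rpow_nonneg (hz i hi) _
    _ = ((∑ i ∈ s, z i) / #s) ^ #s := by rw [← mul_sum, inv_mul_eq_div]

theorem sq_sub_midpoint_le {a b t : ℝ} (ha : a ≤ t) (hb : t ≤ b) :
    (t - (a + b) / 2) ^ 2 ≤ (b - a) ^ 2 / 4 := by
  nlinarith

namespace Matrix

namespace PosSemidef

variable {n : Type*} [Fintype n] [DecidableEq n] {M : Matrix n n ℝ}

theorem det_le_pow_trace_div_card (hM : M.PosSemidef) :
    M.det ≤ (M.trace / Fintype.card n) ^ Fintype.card n := by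
  rw [hM.1.det_eq_prod_eigenvalues, hM.1.trace_eq_sum_eigenvalues]
  simpa using Real.prod_le_pow_sum_div_card univ fun i _ => hM.eigenvalues_nonneg i

/-- Scaling by `D = diag (Mᵢᵢ + ε)^(-1/2)` makes all diagonal entries at most `1`, so the
trace–determinant inequality bounds `det (D M D) = det M / ∏ (Mᵢᵢ + ε)` by `1`. -/
theorem det_le_prod_diag_add (hM : M.PosSemidef) {ε : ℝ} (hε : 0 < ε) :
    M.det ≤ ∏ i, (M i i + ε) := by
  have hpos : ∀ i, 0 < M i i + ε := fun i => add_pos_of_nonneg_of_pos hM.diag_nonneg hε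
  set D : Matrix n n ℝ := diagonal fun i => (√(M i i + ε))⁻¹
  have hN : (D * M * D).PosSemidef := by simpa [D] using hM.mul_mul_conjTranspose_same D
  have hdet : (D * M * D).det = M.det / ∏ i, (M i i + ε) := by
    rw [det_mul, det_mul, det_diagonal, mul_comm, ← mul_assoc, ← prod_mul_distrib, div_eq_mul_inv,
      ← prod_inv_distrib, mul_comm]
    congr 1
    exact prod_congr rfl fun i _ => by rw [← mul_inv, Real.mul_self_sqrt (hpos i).le]
  have htr : (D * M * D).trace ≤ Fintype.card n :=
    calc (D * M * D).trace = ∑ i, M i i / (M i i + ε) := by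
          refine sum_congr rfl fun i _ => ?_
          simp only [diag, D, diagonal_mul, mul_diagonal]
          rw [mul_right_comm, ← mul_inv, Real.mul_self_sqrt (hpos i).le, div_eq_inv_mul]
      _ ≤ ∑ _i : n, (1 : ℝ) := sum_le_sum fun i _ => (div_le_one (hpos i)).2 (by linarith)
      _ = Fintype.card n := by simp
  have hle_one : M.det / ∏ i, (M i i + ε) ≤ 1 := by
    rw [← hdet]
    exact hN.det_le_pow_trace_div_card.trans <| pow_le_one₀ (by positivity [hN.trace_nonneg])
      (div_le_one_of_le₀ htr (Nat.cast_nonneg _))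
  rwa [div_le_one (prod_pos fun i _ => hpos i)] at hle_one

theorem det_le_prod_diag (hM : M.PosSemidef) : M.det ≤ ∏ i, M i i := by
  have hcont : ContinuousWithinAt (fun ε : ℝ => ∏ i, (M i i + ε)) (Set.Ioi 0) 0 :=
    (continuous_finsetProd _ fun i _ => by fun_prop).continuousWithinAt
  simpa using ge_of_tendsto hcont
    (eventually_nhdsWithin_of_forall fun ε hε => hM.det_le_prod_diag_add hε)

end PosSemidef

variable {ι m R : Type*} [Fintype ι] [Fintype m]

theorem posSemidef_sum_smul_vecMulVec_self [DecidableEq m] {δ : ι → ℝ} (hδ : ∀ i, 0 ≤ δ i)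
    (x : ι → m → ℝ) : (∑ i, δ i • vecMulVec (x i) (x i)).PosSemidef :=
  posSemidef_sum _ fun i _ => (posSemidef_vecMulVec_self_star (x i)).smul (hδ i)

theorem sum_smul_vecMulVec_mulVec [CommRing R] (δ : ι → R) (x : ι → m → R) (A : Matrix m m R) :
    ∑ i, δ i • vecMulVec (A *ᵥ x i) (A *ᵥ x i) = A * (∑ i, δ i • vecMulVec (x i) (x i)) * Aᵀ := by
  simp only [mul_sum, sum_mul, mul_smul_comm, smul_mul_assoc, mul_vecMulVec, vecMulVec_mul,
    vecMul_transpose]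

theorem det_one_sub_vecMulVec [CommRing R] [DecidableEq m] (u v : m → R) :
    (1 - vecMulVec u v).det = 1 - v ⬝ᵥ u := by
  rw [vecMulVec_eq Unit, det_one_sub_mul_comm, det_unique, sub_apply, one_apply_eq,
    replicateRow_mul_replicateCol_apply]

theorem one_sub_vecMulVec_mulVec [CommRing R] [DecidableEq m] (u v x : m → R) :
    (1 - vecMulVec u v) *ᵥ x = x - (v ⬝ᵥ x) • u := by
  rw [sub_mulVec, one_mulVec, vecMulVec_mulVec, op_smul_eq_smul]

/-- Centring is the shear `A = 1 - (0, c) e₀ᵀ`, which has determinant `1`. -/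
theorem det_sum_smul_vecMulVec_cons_one_sub [CommRing R] {p : ℕ} (δ : ι → R)
    (z : ι → Fin p → R) (c : Fin p → R) :
    (∑ i, δ i • vecMulVec (Fin.cons 1 (z i - c) : Fin (p + 1) → R) (Fin.cons 1 (z i - c))).det =
      (∑ i, δ i • vecMulVec (Fin.cons 1 (z i) : Fin (p + 1) → R) (Fin.cons 1 (z i))).det := by
  set A : Matrix (Fin (p + 1)) (Fin (p + 1)) R := 1 - vecMulVec (Fin.cons 0 c) (Pi.single 0 1)
  have hA : A.det = 1 := by simp [A, det_one_sub_vecMulVec]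
  have hshift : ∀ i, A *ᵥ (Fin.cons 1 (z i) : Fin (p + 1) → R) = Fin.cons 1 (z i - c) := by
    intro i
    rw [one_sub_vecMulVec_mulVec, single_dotProduct, Fin.cons_zero, one_mul, one_smul]
    ext j
    refine Fin.cases ?_ (fun j => ?_) j <;> simp
  simp_rw [← hshift, sum_smul_vecMulVec_mulVec, det_mul, det_transpose, hA, one_mul, mul_one]

theorem det_sum_smul_vecMulVec_cons_one_le {p : ℕ} {δ : ι → ℝ} (hδ : ∀ i, 0 ≤ δ i)
    {z : ι → Fin p → ℝ} {lo hi : Fin p → ℝ} (hlo : ∀ i j, lo j ≤ z i j)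
    (hhi : ∀ i j, z i j ≤ hi j) :
    (∑ i, δ i • vecMulVec (Fin.cons 1 (z i) : Fin (p + 1) → ℝ) (Fin.cons 1 (z i))).det ≤
      (∑ i, δ i) ^ (p + 1) / 4 ^ p * ∏ j, (hi j - lo j) ^ 2 := by
  set c : Fin p → ℝ := fun j => (lo j + hi j) / 2
  have hdiag : ∀ j, ∑ i, δ i * (z i j - c j) ^ 2 ≤ (∑ i, δ i) * ((hi j - lo j) ^ 2 / 4) := by
    intro j
    rw [sum_mul]
    exact sum_le_sum fun i _ =>
      mul_le_mul_of_nonneg_left (sq_sub_midpoint_le (hlo i j) (hhi i j)) (hδ i)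
  rw [← det_sum_smul_vecMulVec_cons_one_sub δ z c]
  refine (posSemidef_sum_smul_vecMulVec_self hδ _).det_le_prod_diag.trans ?_
  simp only [Fin.prod_univ_succ, Matrix.sum_apply, Matrix.smul_apply, vecMulVec_apply,
    Fin.cons_zero, Fin.cons_succ, Pi.sub_apply, smul_eq_mul, ← sq, one_pow, mul_one]
  calc (∑ i, δ i) * ∏ j, ∑ i, δ i * (z i j - c j) ^ 2
      ≤ (∑ i, δ i) * ∏ j, ((∑ i, δ i) * ((hi j - lo j) ^ 2 / 4)) :=
        mul_le_mul_of_nonneg_left (prod_le_prod (fun j _ => sum_nonneg fun i _ =>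
          mul_nonneg (hδ i) (sq_nonneg _)) fun j _ => hdiag j) (sum_nonneg fun i _ => hδ i)
    _ = (∑ i, δ i) ^ (p + 1) / 4 ^ p * ∏ j, (hi j - lo j) ^ 2 := by
        rw [prod_mul_distrib, prod_const, card_univ, Fintype.card_fin, prod_div_distrib, prod_const,
          card_univ, Fintype.card_fin]
        ring

end Matrix

/-- D-optimality upper bound: for data points `xᵢ = (1, zᵢ)` and a 0-1 vector
`δ` with `∑ δᵢ = k`,
`det (∑ δᵢ xᵢ xᵢᵀ) ≤ (k^(p+1)/4^p) ∏ⱼ (maxᵢ z_{ij} - minᵢ z_{ij})²`. -/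
theorem stmt_3 {n p : ℕ} [NeZero n] (z : Fin n → Fin p → ℝ)
    (δ : Fin n → ℝ) (hδ : ∀ i, δ i = 0 ∨ δ i = 1) (k : ℕ)
    (hk : ∑ i, δ i = k) :
    (∑ i, δ i • Matrix.vecMulVec (Fin.cons 1 (z i) : Fin (p + 1) → ℝ)
        (Fin.cons 1 (z i))).det ≤
      ((k : ℝ) ^ (p + 1) / 4 ^ p) *
        ∏ j, ((Finset.univ.sup' Finset.univ_nonempty fun i => z i j) -
          (Finset.univ.inf' Finset.univ_nonempty fun i => z i j)) ^ 2 := by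
  have hδ_nonneg : ∀ i, 0 ≤ δ i := fun i => by rcases hδ i with h | h <;> simp [h]
  rw [← hk]
  exact det_sum_smul_vecMulVec_cons_one_le hδ_nonneg
    (fun i j => inf'_le (fun i => z i j) (mem_univ i))
    (fun i j => le_sup' (fun i => z i j) (mem_univ i))
end

section
/- Suppose p ≥ 1 and the subdata consists of all 2^p points of the form (a₁,...,a_p) with each a_j ∈ {z_{(1)j}, z_{(n)j}}, each point included k/2^p times (where 2^p divides k). Then with x = (1, z)ᵀ for each such point, det(∑ x xᵀ over the subdata with multiplicity) = (k^{p+1}/4^p) ∏_{j=1}^p (z_{(n)j} - z_{(1)j})². -/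
/-!
Write each corner as `x_s = L u_s`, where `u_s = (1, ±1, …, ±1)` is a sign vector and `L` is the
matrix, in homogeneous coordinates, of the affine map taking the cube `[-1, 1]^p` onto the box;
`L` has determinant `∏ⱼ (z_{(n)j} - z_{(1)j}) / 2`. The sign vectors satisfy
`∑ₛ u_s u_sᵀ = 2^p I`, since flipping one coordinate of `s` is an involution reversing the sign of
every off-diagonal term. Hence the moment matrix is `k L Lᵀ`, with determinant `k^(p+1) (det L)²`.
-/

open Matrix Finset

lemma Fintype.sum_bool_fun_eq_zero_of_flip {ι M : Type*} [Fintype ι] [DecidableEq ι]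
    [AddCommMonoid M] (j : ι) (F : (ι → Bool) → M)
    (hF : ∀ s, F s + F (Function.update s j (!s j)) = 0) :
    ∑ s : ι → Bool, F s = 0 :=
  sum_ninvolution (fun s => Function.update s j (!s j)) hF
    (fun s _ h => by simpa using congrFun h j) (fun _ => mem_univ _) (fun s => by simp)

def boolSign {R : Type*} [Ring R] (b : Bool) : R := if b then 1 else -1

section BoolSign

variable {R : Type*} [Ring R]

@[simp] lemma boolSign_not (b : Bool) : (boolSign (!b) : R) = -boolSign b := by
  cases b <;> simp [boolSign]

@[simp] lemma boolSign_mul_self (b : Bool) : (boolSign b * boolSign b : R) = 1 := by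
  cases b <;> simp [boolSign]

variable {ι : Type*} [Fintype ι] [DecidableEq ι]

lemma sum_boolSign_apply (i : ι) : ∑ s : ι → Bool, (boolSign (s i) : R) = 0 :=
  Fintype.sum_bool_fun_eq_zero_of_flip i _ fun s => by simp

lemma sum_boolSign_mul_boolSign {i j : ι} (hij : i ≠ j) :
    ∑ s : ι → Bool, (boolSign (s i) * boolSign (s j) : R) = 0 :=
  Fintype.sum_bool_fun_eq_zero_of_flip j _ fun s => by simp [Function.update_of_ne hij]

end BoolSign

lemma ite_eq_midpoint_add_mul_boolSign {K : Type*} [Field K] [NeZero (2 : K)] (b : Bool)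
    (x y : K) : (if b then y else x) = (y + x) / 2 + (y - x) / 2 * boolSign b := by
  cases b <;> simp only [boolSign, Bool.false_eq_true, if_true, if_false] <;> field_simp <;> ring

def signPoint {R : Type*} [Ring R] {p : ℕ} (s : Fin p → Bool) : Fin (p + 1) → R :=
  Fin.cons 1 fun j => boolSign (s j)

lemma sum_vecMulVec_signPoint (R : Type*) [CommRing R] (p : ℕ) :
    ∑ s : Fin p → Bool, vecMulVec (signPoint s) (signPoint s) =
      (2 ^ p : R) • (1 : Matrix (Fin (p + 1)) (Fin (p + 1)) R) := by
  ext a b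
  simp only [Matrix.sum_apply, vecMulVec_apply, Matrix.smul_apply, one_apply, smul_eq_mul]
  induction a using Fin.cases <;> induction b using Fin.cases
  case zero.zero => simp [signPoint]
  case zero.succ j => simp [signPoint, sum_boolSign_apply, (Fin.succ_ne_zero j).symm]
  case succ.zero i => simp [signPoint, sum_boolSign_apply]
  case succ.succ i j =>
    rcases eq_or_ne i j with rfl | hij
    · simp [signPoint]
    · simp [signPoint, sum_boolSign_mul_boolSign hij, hij]

lemma mul_vecMulVec_mul_transpose {m n R : Type*} [Fintype m] [Fintype n] [CommSemiring R]
    (L : Matrix m n R) (u : n → R) :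
    L * vecMulVec u u * Lᵀ = vecMulVec (L *ᵥ u) (L *ᵥ u) := by
  rw [mul_vecMulVec, vecMulVec_mul, vecMul_transpose]

def homogenize {R : Type*} [Zero R] [One R] {p : ℕ} (m : Fin p → R)
    (A : Matrix (Fin p) (Fin p) R) : Matrix (Fin (p + 1)) (Fin (p + 1)) R :=
  Matrix.of (Fin.cons (Fin.cons 1 0) fun i => Fin.cons (m i) (A i))

section Homogenize

variable {R : Type*} [CommRing R] {p : ℕ} (m : Fin p → R) (A : Matrix (Fin p) (Fin p) R)

lemma homogenize_mulVec_cons_one (z : Fin p → R) :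
    homogenize m A *ᵥ Fin.cons 1 z = Fin.cons 1 (m + A *ᵥ z) := by
  ext a
  induction a using Fin.cases <;> simp [homogenize, mulVec, dotProduct, Fin.sum_univ_succ]

lemma det_homogenize : (homogenize m A).det = A.det := by
  rw [det_succ_row_zero, Fin.sum_univ_succ]
  simp [homogenize, submatrix]
  rfl

end Homogenize

theorem stmt_4_general (p : ℕ) (zmin zmax : Fin p → ℝ) (k : ℕ) (hk : 2 ^ p ∣ k) :
    (∑ s : Fin p → Bool, ((k / 2 ^ p : ℕ) : ℝ) •
        Matrix.vecMulVec
          (Fin.cons 1 (fun j => if s j then zmax j else zmin j) : Fin (p + 1) → ℝ)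
          (Fin.cons 1 (fun j => if s j then zmax j else zmin j))).det =
      ((k : ℝ) ^ (p + 1) / 4 ^ p) * ∏ j, (zmax j - zmin j) ^ 2 := by
  set L := homogenize (fun j => (zmax j + zmin j) / 2) (diagonal fun j => (zmax j - zmin j) / 2)
  have hcorner (s : Fin p → Bool) :
      (Fin.cons 1 (fun j => if s j then zmax j else zmin j) : Fin (p + 1) → ℝ) =
        L *ᵥ signPoint s := by
    rw [signPoint, homogenize_mulVec_cons_one]
    congr 1
    ext j
    rw [Pi.add_apply, mulVec_diagonal, ite_eq_midpoint_add_mul_boolSign]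
  have hmoment : ∑ s : Fin p → Bool, ((k / 2 ^ p : ℕ) : ℝ) •
      vecMulVec (L *ᵥ signPoint s) (L *ᵥ signPoint s) = (k : ℝ) • (L * Lᵀ) := by
    have hk' : ((k / 2 ^ p : ℕ) : ℝ) * 2 ^ p = k := by exact_mod_cast Nat.div_mul_cancel hk
    simp_rw [← smul_sum, ← mul_vecMulVec_mul_transpose]
    rw [← Finset.sum_mul, ← Finset.mul_sum, sum_vecMulVec_signPoint, Matrix.mul_smul,
      Matrix.smul_mul, Matrix.mul_one, smul_smul, hk']
  simp_rw [hcorner]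
  rw [hmoment, det_smul, det_mul, det_transpose, det_homogenize, det_diagonal, Fintype.card_fin,
    ← prod_mul_distrib]
  simp_rw [← sq, div_pow]
  rw [prod_div_distrib, prod_const, card_univ, Fintype.card_fin]
  ring

/-- Attainment of the D-optimality bound: the full factorial design on the
corners of the box `∏ [z_{(1)j}, z_{(n)j}]`, with each of the `2^p` corner
points replicated `k/2^p` times, achieves
`det (∑ x xᵀ) = (k^(p+1)/4^p) ∏ⱼ (z_{(n)j} - z_{(1)j})²`. -/
theorem stmt_4 (p : ℕ) (hp : 1 ≤ p) (zmin zmax : Fin p → ℝ)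
    (hz : ∀ j, zmin j < zmax j) (k : ℕ) (hk : 2 ^ p ∣ k) :
    (∑ s : Fin p → Bool, ((k / 2 ^ p : ℕ) : ℝ) •
        Matrix.vecMulVec
          (Fin.cons 1 (fun j => if s j then zmax j else zmin j) : Fin (p + 1) → ℝ)
          (Fin.cons 1 (fun j => if s j then zmax j else zmin j))).det =
      ((k : ℝ) ^ (p + 1) / 4 ^ p) * ∏ j, (zmax j - zmin j) ^ 2 :=
  stmt_4_general p zmin zmax k hk
end

section
/- Let z*_{1},...,z*_{k} be real values such that at least r of them are ≤ L and at least r of them are ≥ U, where L ≤ U. Then the sum of squared deviations about the sample mean satisfies ∑ᵢ(z*ᵢ - z̄*)² ≥ (r/2)(U - L)². -/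
/-!
The mean plays no role: the bound holds for the squared deviations about any centre `c`.
Each of the `r` values `≤ L` deviates from `c` by at least `a = max (c - L) 0`, each of the
`r` values `≥ U` by at least `b = max (U - c) 0`, and these two groups are disjoint when
`L < U`. Since `U - L ≤ a + b` and `(a + b)² ≤ 2 (a² + b²)`, the sum of squares is at least
`r (a² + b²) ≥ (r / 2) (U - L)²`.
-/

open Finset

lemma max_zero_sq_le_sq {t s : ℝ} (h : t ≤ s) : max t 0 ^ 2 ≤ s ^ 2 := by
  rcases le_total t 0 with ht | ht
  · rw [max_eq_right ht, sq, zero_mul]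
    exact sq_nonneg s
  · rw [max_eq_left ht]
    exact pow_le_pow_left₀ ht h 2

section

variable {ι : Type*} [Fintype ι]

lemma card_mul_add_card_mul_le_sum_sq_sub (z : ι → ℝ) (c : ℝ) {L U : ℝ} (hLU : L < U) :
    (#{i | z i ≤ L} : ℝ) * max (c - L) 0 ^ 2 + #{i | U ≤ z i} * max (U - c) 0 ^ 2 ≤
      ∑ i, (z i - c) ^ 2 := by
  classical
  set low : Finset ι := {i | z i ≤ L}
  set high : Finset ι := {i | U ≤ z i}
  have hdisj : Disjoint low high := by
    rw [disjoint_filter]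
    intro i _ hL hU
    linarith
  have hlow : #low • max (c - L) 0 ^ 2 ≤ ∑ i ∈ low, (z i - c) ^ 2 :=
    card_nsmul_le_sum _ _ _ fun i hi => by
      rw [← neg_sub c, neg_sq]
      exact max_zero_sq_le_sq (by linarith [(mem_filter.mp hi).2])
  have hhigh : #high • max (U - c) 0 ^ 2 ≤ ∑ i ∈ high, (z i - c) ^ 2 :=
    card_nsmul_le_sum _ _ _ fun i hi =>
      max_zero_sq_le_sq (by linarith [(mem_filter.mp hi).2])
  rw [nsmul_eq_mul] at hlow hhigh
  calc _ ≤ ∑ i ∈ low ∪ high, (z i - c) ^ 2 := by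
        rw [sum_union hdisj]
        exact add_le_add hlow hhigh
    _ ≤ ∑ i, (z i - c) ^ 2 :=
        sum_le_sum_of_subset_of_nonneg (subset_univ _) fun i _ _ => sq_nonneg _

theorem card_div_two_mul_sq_le_sum_sq_sub (z : ι → ℝ) (c : ℝ) {r : ℕ} {L U : ℝ}
    (hLU : L ≤ U) (hL : r ≤ #{i | z i ≤ L}) (hU : r ≤ #{i | U ≤ z i}) :
    (r : ℝ) / 2 * (U - L) ^ 2 ≤ ∑ i, (z i - c) ^ 2 := by
  rcases hLU.eq_or_lt with rfl | hlt
  · simpa using sum_nonneg fun i _ => sq_nonneg (z i - c)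
  set a := max (c - L) 0
  set b := max (U - c) 0
  have hspread : U - L ≤ a + b := by
    linarith [le_max_left (c - L) 0, le_max_left (U - c) 0]
  have hr : (r : ℝ) * a ^ 2 + r * b ^ 2 ≤ ∑ i, (z i - c) ^ 2 :=
    le_trans (by gcongr) (card_mul_add_card_mul_le_sum_sq_sub z c hlt)
  have hsq : (U - L) ^ 2 ≤ 2 * (a ^ 2 + b ^ 2) := by
    nlinarith [sq_nonneg (a - b), pow_le_pow_left₀ (sub_nonneg.mpr hLU) hspread 2]
  linarith [mul_le_mul_of_nonneg_left hsq (Nat.cast_nonneg r : (0 : ℝ) ≤ r)]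

end

theorem stmt_7_general (k r : ℕ) (z : Fin k → ℝ) (L U : ℝ) (hLU : L ≤ U)
    (hL : r ≤ (Finset.univ.filter fun i => z i ≤ L).card)
    (hU : r ≤ (Finset.univ.filter fun i => U ≤ z i).card) :
    ((r : ℝ) / 2) * (U - L) ^ 2 ≤ ∑ i, (z i - (∑ i, z i) / k) ^ 2 :=
  card_div_two_mul_sq_le_sum_sq_sub z _ hLU hL hU

/-- If among `z₁,…,z_k` at least `r` values are `≤ L` and at least `r` values
are `≥ U` with `L ≤ U`, then `∑ (zᵢ - z̄)² ≥ (r/2)(U-L)²`. -/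
theorem stmt_7 (k r : ℕ) (hk : 0 < k) (z : Fin k → ℝ) (L U : ℝ) (hLU : L ≤ U)
    (hL : r ≤ (Finset.univ.filter fun i => z i ≤ L).card)
    (hU : r ≤ (Finset.univ.filter fun i => U ≤ z i).card) :
    ((r : ℝ) / 2) * (U - L) ^ 2 ≤ ∑ i, (z i - (∑ i, z i) / k) ^ 2 :=
  stmt_7_general k r z L U hLU hL hU
end

section
/- Let X* be a k×(p+1) design matrix whose first column is all ones and remaining columns have sample means z̄*_j and sample variances var(z*_j) > 0, and let R be the sample correlation matrix of the last p columns. Then det((X*)ᵀX*) = k (k-1)^p det(R) ∏_{j=1}^p var(z*_j). -/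
open Matrix

/-- Sample mean of the `j`-th covariate column. -/
noncomputable def sMean {k p : ℕ} (z : Fin k → Fin p → ℝ) (j : Fin p) : ℝ :=
  (∑ i, z i j) / k

/-- Sample variance of the `j`-th covariate column. -/
noncomputable def sVar {k p : ℕ} (z : Fin k → Fin p → ℝ) (j : Fin p) : ℝ :=
  (∑ i, (z i j - sMean z j) ^ 2) / ((k : ℝ) - 1)

/-- Sample correlation matrix of the covariate columns. -/
noncomputable def sCorr {k p : ℕ} (z : Fin k → Fin p → ℝ) :
    Matrix (Fin p) (Fin p) ℝ :=
  Matrix.of fun j₁ j₂ =>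
    (∑ i, (z i j₁ - sMean z j₁) * (z i j₂ - sMean z j₂)) /
      (((k : ℝ) - 1) * Real.sqrt (sVar z j₁ * sVar z j₂))

/-- Design matrix with an all-ones first column. -/
def designX {k p : ℕ} (z : Fin k → Fin p → ℝ) :
    Matrix (Fin k) (Fin (p + 1)) ℝ :=
  Matrix.of fun i j => (Fin.cons 1 (z i) : Fin (p + 1) → ℝ) j

/-!
Subtracting the column means from the covariates is right multiplication of `X*` by a unipotent
matrix, so it does not change `det (X*ᵀ X*)`. For the centred design the intercept column is
orthogonal to the others, hence the Gram matrix is block diagonal `diag(k, S)` with `S` the scatter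
matrix, and `S = D ((k - 1) R) D` with `D = diag (√var(z*_j))`.
-/

namespace Matrix

variable {R : Type*} [CommRing R]

theorem det_succ_eq_mul_det_submatrix_of_row_zero {n : ℕ}
    (A : Matrix (Fin (n + 1)) (Fin (n + 1)) R)
    (h : ∀ j : Fin n, A 0 j.succ = 0) :
    A.det = A 0 0 * (A.submatrix Fin.succ Fin.succ).det := by
  simp [det_succ_row_zero A, Fin.sum_univ_succ, h]

theorem det_succ_eq_mul_det_submatrix_of_col_zero {n : ℕ}
    (A : Matrix (Fin (n + 1)) (Fin (n + 1)) R)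
    (h : ∀ i : Fin n, A i.succ 0 = 0) :
    A.det = A 0 0 * (A.submatrix Fin.succ Fin.succ).det := by
  rw [← det_transpose, det_succ_eq_mul_det_submatrix_of_row_zero _ h, transpose_apply,
    ← transpose_submatrix, det_transpose]

theorem det_eq_pow_mul_det_div_sqrt_mul_prod {n : Type*} [Fintype n] [DecidableEq n]
    (A : Matrix n n ℝ) {c : ℝ} (hc : c ≠ 0) {v : n → ℝ} (hv : ∀ i, 0 < v i) :
    A.det = c ^ Fintype.card n *
      (of fun i j => A i j / (c * √(v i * v j))).det * ∏ i, v i := by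
  set D : Matrix n n ℝ := diagonal fun i => √(v i)
  have hsqrt (i : n) : √(v i) ≠ 0 := (Real.sqrt_pos.mpr (hv i)).ne'
  have hA : A = D * (c • of fun i j => A i j / (c * √(v i * v j))) * D := by
    ext i j
    simp only [D, mul_diagonal, diagonal_mul, smul_apply, of_apply, smul_eq_mul,
      Real.sqrt_mul (hv i).le]
    field_simp [hsqrt i, hsqrt j]
  have hD : D.det * D.det = ∏ i, v i := by
    rw [det_diagonal, ← Finset.prod_mul_distrib]
    exact Finset.prod_congr rfl fun i _ => Real.mul_self_sqrt (hv i).le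
  conv_lhs => rw [hA, det_mul, det_mul, det_smul]
  rw [← hD]
  ring

end Matrix

open Matrix

section DesignMatrix

variable {k p : ℕ}

/-- Right multiplication by `interceptShift m` adds `m j` times the first column to column
`j + 1`. -/
def interceptShift (m : Fin p → ℝ) : Matrix (Fin (p + 1)) (Fin (p + 1)) ℝ :=
  of (Fin.cons (Fin.cons 1 m) fun j => Fin.cons 0 (Pi.single j 1))

theorem det_interceptShift (m : Fin p → ℝ) : (interceptShift m).det = 1 := by
  have hsub : (interceptShift m).submatrix Fin.succ Fin.succ = 1 := by
    ext i j
    simp [interceptShift, one_apply, Pi.single_apply, eq_comm]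
  rw [det_succ_eq_mul_det_submatrix_of_col_zero _ fun i => rfl, hsub, det_one, mul_one]
  rfl

theorem designX_sub_mul_interceptShift (z : Fin k → Fin p → ℝ) (m : Fin p → ℝ) :
    designX (fun i j => z i j - m j) * interceptShift m = designX z := by
  ext i b
  refine Fin.cases ?_ (fun l => ?_) b
  · simp [mul_apply, Fin.sum_univ_succ, designX, interceptShift]
  · simp [mul_apply, Fin.sum_univ_succ, designX, interceptShift, Pi.single_apply]

theorem det_gram_designX_of_sum_eq_zero (w : Fin k → Fin p → ℝ)
    (hw : ∀ j, ∑ i, w i j = 0) :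
    ((designX w)ᵀ * designX w).det = k * ((of w)ᵀ * of w).det := by
  rw [det_succ_eq_mul_det_submatrix_of_row_zero]
  · congr 1
    simp [mul_apply, designX]
  · intro j
    simpa [mul_apply, designX] using hw j

end DesignMatrix

section SampleStatistics

variable {k p : ℕ}

noncomputable def centered (z : Fin k → Fin p → ℝ) : Fin k → Fin p → ℝ :=
  fun i j => z i j - sMean z j

theorem sum_centered (z : Fin k → Fin p → ℝ) (j : Fin p) : ∑ i, centered z i j = 0 := by
  rcases Nat.eq_zero_or_pos k with rfl | hk
  · simp
  · have hk' : (k : ℝ) ≠ 0 := Nat.cast_ne_zero.mpr hk.ne'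
    simp [centered, sMean, Finset.sum_sub_distrib, mul_div_cancel₀ _ hk']

theorem sCorr_eq_of_scatter (z : Fin k → Fin p → ℝ) :
    sCorr z = of fun j₁ j₂ => ((of (centered z))ᵀ * of (centered z)) j₁ j₂ /
      (((k : ℝ) - 1) * √(sVar z j₁ * sVar z j₂)) :=
  rfl

end SampleStatistics

/-- `det (X*ᵀ X*) = k (k-1)^p det(R) ∏ⱼ var(z*_j)` for a design matrix with
intercept column, positive sample variances, and sample correlation matrix `R`. -/
theorem stmt_10 {k p : ℕ} (hk : 2 ≤ k) (z : Fin k → Fin p → ℝ)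
    (hvar : ∀ j, 0 < sVar z j) :
    ((designX z)ᵀ * designX z).det =
      (k : ℝ) * ((k : ℝ) - 1) ^ p * (sCorr z).det * ∏ j, sVar z j := by
  have hk₁ : (k : ℝ) - 1 ≠ 0 := by
    rw [sub_ne_zero]
    exact_mod_cast (by omega : k ≠ 1)
  have hX : designX z = designX (centered z) * interceptShift (sMean z) :=
    (designX_sub_mul_interceptShift z (sMean z)).symm
  rw [hX, transpose_mul, Matrix.mul_assoc, ← Matrix.mul_assoc (designX _)ᵀ, det_mul, det_mul,
    det_transpose, det_interceptShift,
    det_gram_designX_of_sum_eq_zero _ (sum_centered z),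
    det_eq_pow_mul_det_div_sqrt_mul_prod _ hk₁ hvar, ← sCorr_eq_of_scatter, Fintype.card_fin]
  ring
end
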